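/- Let φ : Y → X be a continuous map between Hausdorff topological spaces and let Z = Y ∪̇_φ X. If X is second countable and the countable power Y^ω is hereditarily separable, then the countable power Z^ω is hereditarily separable. -/

import Mathlib

/-- The topology of `Z = Y ∪̇_φ X` on the disjoint union `X ⊕ Y`: it is generated by the base
consisting of (a) all open subsets of `Y` and
(b) all sets `[U,K] = U ∪ (φ⁻¹(U) \ K)` with `U` open in `X` and `K` compact in `Y`. -/
def dotCup {X Y : Type*} [TopologicalSpace X] [TopologicalSpace Y] (φ : Y → X) :
    TopologicalSpace (X ⊕ Y) :=
  TopologicalSpace.generateFrom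
    ({s | ∃ V : Set Y, IsOpen V ∧ s = Sum.inr '' V} ∪
     {s | ∃ (U : Set X) (K : Set Y), IsOpen U ∧ IsCompact K ∧
        s = Sum.inl '' U ∪ Sum.inr '' (φ ⁻¹' U \ K)})

/-- A topological space is hereditarily separable iff every subspace is separable. -/
def HereditarilySeparable (W : Type*) [TopologicalSpace W] : Prop :=
  ∀ s : Set W, TopologicalSpace.SeparableSpace s

/-!
The topology of `Y ∪̇_φ X` is coarser than the sum topology of `X ⊕ Y` (the compact sets `K` are
closed in the Hausdorff space `Y`), so it suffices to show that `(X ⊕ Y)^ω` with the product of sum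
topologies is hereditarily separable. A basic neighbourhood of `w` constrains finitely many
coordinates, a set `F` where `w` lies in `X` and a set `G` where it lies in `Y`. Among the points
with the same pattern on `F` and `G`, it is the preimage of an open subset of `X^F × Y^G`, which is
hereditarily separable as the product of a second countable space and a continuous image of `Y^ω`.
Countably many patterns `(F, G)` cover all cases, and countable dense sets of the pieces combine.
-/

open TopologicalSpace Set

section HereditarilySeparable

variable {W M : Type*} [TopologicalSpace W] [TopologicalSpace M]

theorem HereditarilySeparable.of_surjective (hW : HereditarilySeparable W) {f : W → M}
    (hf : Continuous f) (hsurj : Function.Surjective f) : HereditarilySeparable M := by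
  intro s
  have := hW (f ⁻¹' s)
  have hmaps : MapsTo f (f ⁻¹' s) s := fun _ h => h
  refine (Function.Surjective.denseRange ?_).separableSpace (hf.restrict hmaps)
  rintro ⟨b, hb⟩
  obtain ⟨a, rfl⟩ := hsurj b
  exact ⟨⟨a, hb⟩, rfl⟩

theorem HereditarilySeparable.exists_countable_range_subset_closure
    (hM : HereditarilySeparable M) {α : Type*} (q : α → M) :
    ∃ D : Set α, D.Countable ∧ range q ⊆ closure (q '' D) := by
  have := hM (range q)
  obtain ⟨D₀, hD₀, hdense⟩ := exists_countable_dense (range q)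
  refine ⟨rangeSplitting q '' D₀, hD₀.image _, ?_⟩
  rw [← image_comp, comp_rangeSplitting]
  exact Subtype.dense_iff.1 hdense

/-- The maps `q i` need not be continuous: it is enough that they see every neighbourhood in `W`. -/
theorem separableSpace_of_countable_cover {ι : Type*} [Countable ι] {S : Set W}
    {T : ι → Set W} (hTS : ∀ i, T i ⊆ S) {M : ι → Type*} [∀ i, TopologicalSpace (M i)]
    (hM : ∀ i, HereditarilySeparable (M i)) (q : ∀ i, T i → M i)
    (h : ∀ w ∈ S, ∀ O : Set W, IsOpen O → w ∈ O → ∃ i, ∃ hw : w ∈ T i, ∃ O' : Set (M i),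
      IsOpen O' ∧ q i ⟨w, hw⟩ ∈ O' ∧ ∀ w' : T i, q i w' ∈ O' → (w' : W) ∈ O) :
    SeparableSpace S := by
  choose D hD hDq using fun i => (hM i).exists_countable_range_subset_closure (q i)
  set C : Set W := ⋃ i, (↑) '' D i
  have hCS : C ⊆ S := iUnion_subset fun i => by
    rintro _ ⟨w, -, rfl⟩
    exact hTS i w.2
  have hSC : S ⊆ closure C := by
    intro w hw
    rw [mem_closure_iff]
    intro O hO hwO
    obtain ⟨i, hwi, O', hO', hqw, hO'O⟩ := h w hw O hO hwO
    obtain ⟨_, hd, d, hdD, rfl⟩ := mem_closure_iff.1 (hDq i ⟨_, rfl⟩) O' hO' hqw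
    exact ⟨d, hO'O d hd, mem_iUnion.2 ⟨i, d, hdD, rfl⟩⟩
  refine ⟨⟨(↑) ⁻¹' C, (countable_iUnion fun i => (hD i).image _).preimage Subtype.val_injective,
    Subtype.dense_iff.2 ?_⟩⟩
  rwa [Subtype.image_preimage_coe, inter_eq_right.2 hCS]

theorem HereditarilySeparable.prod_left {A : Type*} [TopologicalSpace A]
    [SecondCountableTopology A] (hM : HereditarilySeparable M) : HereditarilySeparable (A × M) := by
  intro S
  have := (countable_countableBasis A).to_subtype
  refine separableSpace_of_countable_cover (T := fun U : countableBasis A => S ∩ Prod.fst ⁻¹' U)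
    (fun _ => inter_subset_left) (fun _ => hM) (fun _ p => p.1.2) ?_
  rintro ⟨a, m⟩ hS O hO ham
  obtain ⟨U, V, hU, hV, ha, hm, hUV⟩ := isOpen_prod_iff.1 hO a m ham
  obtain ⟨U', hU', haU', hU'U⟩ := (isBasis_countableBasis A).exists_subset_of_mem_open ha hU
  exact ⟨⟨U', hU'⟩, ⟨hS, haU'⟩, V, hV, hm, fun p hp => hUV ⟨hU'U p.2.2, hp⟩⟩

theorem HereditarilySeparable.restrict {ι : Type*} (hM : HereditarilySeparable (ι → M))
    (s : Set ι) : HereditarilySeparable (s → M) := by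
  classical
  rcases isEmpty_or_nonempty M with _ | ⟨⟨m⟩⟩
  · exact fun _ => ⟨⟨univ, countable_univ, dense_univ⟩⟩
  refine hM.of_surjective (f := fun g (n : s) => g n) (continuous_pi fun _ => continuous_apply _) ?_
  intro g
  refine ⟨fun n => if hn : n ∈ s then g ⟨n, hn⟩ else m, ?_⟩
  ext ⟨n, hn⟩
  simp [hn]

end HereditarilySeparable

theorem HereditarilySeparable.mono {W : Type*} {t₁ t₂ : TopologicalSpace W} (h : t₁ ≤ t₂)
    (hW : @HereditarilySeparable W t₁) : @HereditarilySeparable W t₂ :=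
  @HereditarilySeparable.of_surjective W W t₁ t₂ hW id (continuous_id_of_le h)
    Function.surjective_id

theorem HereditarilySeparable.pi_sum {ι X Y : Type*} [Countable ι] [TopologicalSpace X]
    [TopologicalSpace Y] [SecondCountableTopology X] (hY : HereditarilySeparable (ι → Y)) :
    HereditarilySeparable (ι → X ⊕ Y) := by
  classical
  intro S
  let T : Finset ι × Finset ι → Set (ι → X ⊕ Y) := fun FG =>
    {w ∈ S | (∀ n ∈ FG.1, (w n).isLeft) ∧ ∀ n ∈ FG.2, (w n).isRight}
  refine separableSpace_of_countable_cover (T := T) (fun _ _ hw => hw.1)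
    (fun FG => (hY.restrict FG.2).prod_left (A := FG.1 → X))
    (fun FG w => (fun n => (w.1 n).getLeft (w.2.2.1 n n.2),
      fun n => (w.1 n).getRight (w.2.2.2 n n.2))) ?_
  intro w hw O hO hwO
  obtain ⟨E, u, hu, hEu⟩ := isOpen_pi_iff.1 hO w hwO
  let F := E.filter fun n => (w n).isLeft
  let G := E.filter fun n => (w n).isRight
  have hFE : ∀ n ∈ F, n ∈ E := fun _ hn => (Finset.mem_filter.1 hn).1
  have hGE : ∀ n ∈ G, n ∈ E := fun _ hn => (Finset.mem_filter.1 hn).1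
  refine ⟨(F, G),
    ⟨hw, fun _ hn => (Finset.mem_filter.1 hn).2, fun _ hn => (Finset.mem_filter.1 hn).2⟩,
    (univ.pi fun n : F => Sum.inl ⁻¹' u n) ×ˢ (univ.pi fun n : G => Sum.inr ⁻¹' u n), ?_, ?_, ?_⟩
  · exact IsOpen.prod
      (isOpen_set_pi finite_univ fun n _ => (hu n (hFE n n.2)).1.preimage continuous_inl)
      (isOpen_set_pi finite_univ fun n _ => (hu n (hGE n n.2)).1.preimage continuous_inr)
  · refine ⟨fun n _ => ?_, fun n _ => ?_⟩
    · simpa using (hu n (hFE n n.2)).2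
    · simpa using (hu n (hGE n n.2)).2
  · rintro w' ⟨hF', hG'⟩
    refine hEu fun n hn => ?_
    cases hwn : w n with
    | inl _ =>
      have hnF : n ∈ F := Finset.mem_filter.2 ⟨hn, by simp [hwn]⟩
      simpa using hF' ⟨n, hnF⟩ trivial
    | inr _ =>
      have hnG : n ∈ G := Finset.mem_filter.2 ⟨hn, by simp [hwn]⟩
      simpa using hG' ⟨n, hnG⟩ trivial

theorem sum_le_dotCup {X Y : Type*} [TopologicalSpace X] [TopologicalSpace Y] [T2Space Y]
    {φ : Y → X} (hφ : Continuous φ) :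
    instTopologicalSpaceSum ≤ dotCup φ := by
  refine le_generateFrom ?_
  rintro _ (⟨V, hV, rfl⟩ | ⟨U, K, hU, hK, rfl⟩) <;> rw [isOpen_sum_iff]
  · simpa [preimage_image_eq _ Sum.inr_injective] using hV
  · simpa [preimage_image_eq _ Sum.inl_injective, preimage_image_eq _ Sum.inr_injective] using
      ⟨hU, (hU.preimage hφ).sdiff hK.isClosed⟩

theorem dotCup_pow_hs_general {X Y : Type*} [TopologicalSpace X] [TopologicalSpace Y]
    [T2Space Y] [SecondCountableTopology X]
    (φ : Y → X) (hφ : Continuous φ)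
    (hY : HereditarilySeparable (ℕ → Y)) :
    @HereditarilySeparable (ℕ → X ⊕ Y)
      (@Pi.topologicalSpace ℕ (fun _ => X ⊕ Y) (fun _ => dotCup φ)) :=
  (HereditarilySeparable.pi_sum hY).mono <| iInf_mono fun _ => induced_mono (sum_le_dotCup hφ)

/-- If `X` is second countable and `Y^ω` is hereditarily separable, then `Z^ω` is hereditarily
separable, where `Z = Y ∪̇_φ X`. -/
theorem dotCup_pow_hs {X Y : Type*} [TopologicalSpace X] [TopologicalSpace Y]
    [T2Space X] [T2Space Y] [SecondCountableTopology X]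
    (φ : Y → X) (hφ : Continuous φ)
    (hY : HereditarilySeparable (ℕ → Y)) :
    @HereditarilySeparable (ℕ → X ⊕ Y)
      (@Pi.topologicalSpace ℕ (fun _ => X ⊕ Y) (fun _ => dotCup φ)) :=
  dotCup_pow_hs_general φ hφ hY
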